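/- If Z ~ N(g, 1) and q ≥ 1, then E[|Z|^{2/q}] = (1/√π) · 2^{1/q} · Γ(1/q + 1/2) · M(−1/q, 1/2, −g²/2), where M(c, d, x) = Σ_{n≥0} (c)_n x^n / ((d)_n n!) is the confluent hypergeometric function. -/

import Mathlib

/-!
Write `E|Z|^p` as `(2π)^{-1/2} e^{-g²/2} ∫ |x|^p e^{-x²/2} e^{gx} dx`. The weight `|x|^p e^{-x²/2}`
is even, so `e^{gx}` may be replaced by `cosh (gx) = ∑ (gx)^{2m}/(2m)!`; integrating term by term
against the absolute Gaussian moments `∫ |x|^s e^{-x²/2} = 2^{(s+1)/2} Γ((s+1)/2)` gives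
`2^a Γ(a) e^{-g²/2} M(a, 1/2, g²/2)` with `a = (p+1)/2`. Kummer's transformation
`e^{-t} M(a, b, t) = M(b - a, b, -t)`, whose coefficientwise form is the Chu–Vandermonde identity,
turns this into `M(-p/2, 1/2, -g²/2)`.
-/

open MeasureTheory ProbabilityTheory Real
open Finset Polynomial
open scoped Nat

section Pochhammer

variable {R : Type*} [CommRing R]

theorem ascPochhammer_add_eval (x : R) (m n : ℕ) :
    (ascPochhammer R (m + n)).eval x
      = (ascPochhammer R m).eval x * (ascPochhammer R n).eval (x + m) := by
  rw [← ascPochhammer_mul, eval_mul, eval_comp]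
  simp

theorem descPochhammer_eval_neg (a : R) (n : ℕ) :
    (descPochhammer R n).eval (-a) = (-1) ^ n * (ascPochhammer R n).eval a := by
  rw [← neg_neg a, ascPochhammer_eval_neg_eq_descPochhammer, neg_neg, ← mul_assoc, ← mul_pow]
  simp

theorem descPochhammer_int_smeval (r : R) (n : ℕ) :
    (descPochhammer ℤ n).smeval r = (descPochhammer R n).eval r := by
  rw [← aeval_eq_smeval, aeval_def, ← eval_map, descPochhammer_map]

/-- Chu–Vandermonde: the falling-factorial identity `Ring.descPochhammer_smeval_add`
at `-a` and `b + n - 1`. -/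
theorem ascPochhammer_eval_sub_eq_sum (a b : R) (n : ℕ) :
    (ascPochhammer R n).eval (b - a) = ∑ ij ∈ antidiagonal n,
      (n.choose ij.1 : R) * ((-1) ^ ij.1 * (ascPochhammer R ij.1).eval a
        * (ascPochhammer R ij.2).eval (b + ij.1)) := by
  have h := Ring.descPochhammer_smeval_add n (Commute.all (-a) (b + n - 1))
  simp only [descPochhammer_int_smeval, descPochhammer_eval_neg] at h
  simp only [descPochhammer_eval_eq_ascPochhammer] at h
  rw [show -a + (b + n - 1) - n + 1 = b - a by ring] at h
  rw [h]
  refine sum_congr rfl fun ij hij => ?_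
  rw [← mem_antidiagonal.mp hij]
  push_cast
  ring_nf

end Pochhammer

theorem Real.Gamma_add_nat_eq_mul_ascPochhammer {a : ℝ} (ha : 0 < a) (n : ℕ) :
    Gamma (a + n) = Gamma a * (ascPochhammer ℝ n).eval a := by
  induction n with
  | zero => simp
  | succ n ih =>
    rw [Nat.cast_succ, ← add_assoc, Gamma_add_one (by positivity), ih, ascPochhammer_succ_eval]
    ring

theorem Nat.cast_factorial_two_mul (m : ℕ) :
    ((2 * m)! : ℝ) = 4 ^ m * m ! * (ascPochhammer ℝ m).eval (1 / 2) := by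
  induction m with
  | zero => simp
  | succ m ih =>
    rw [show 2 * (m + 1) = 2 * m + 1 + 1 by ring, Nat.factorial_succ, Nat.factorial_succ,
      Nat.factorial_succ, ascPochhammer_succ_eval]
    push_cast
    rw [ih]
    ring

noncomputable def kummerMTerm (a b x : ℝ) (n : ℕ) : ℝ :=
  (ascPochhammer ℝ n).eval a * x ^ n / ((ascPochhammer ℝ n).eval b * n !)

noncomputable def kummerM (a b x : ℝ) : ℝ :=
  ∑' n, kummerMTerm a b x n

section Kummer

variable {a b : ℝ}

theorem kummerMTerm_succ (x : ℝ) (hb : 0 < b) (n : ℕ) :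
    kummerMTerm a b x (n + 1) = kummerMTerm a b x n * ((a + n) * x / ((b + n) * (n + 1))) := by
  have := ascPochhammer_pos n b hb
  simp only [kummerMTerm, ascPochhammer_succ_eval, Nat.factorial_succ, pow_succ]
  push_cast
  field_simp

theorem summable_kummerMTerm (x : ℝ) (hb : 0 < b) : Summable (kummerMTerm a b x) := by
  refine summable_of_ratio_norm_eventually_le (r := 1 / 2) (by norm_num) ?_
  filter_upwards [Filter.eventually_ge_atTop ⌈|a| + 4 * |x|⌉₊] with n hn
  have hn : |a| + 4 * |x| ≤ n := Nat.ceil_le.mp hn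
  have hratio : |(a + n) * x / ((b + n) * (n + 1))| ≤ 1 / 2 := by
    rw [abs_div, abs_mul, abs_of_pos (by positivity : 0 < (b + n) * (n + 1)),
      div_le_iff₀ (by positivity)]
    have ha : |a + n| ≤ |a| + n := (abs_add_le _ _).trans_eq (by simp)
    nlinarith [abs_nonneg a, abs_nonneg x, mul_le_mul_of_nonneg_right ha (abs_nonneg x)]
  rw [kummerMTerm_succ x hb, norm_mul, mul_comm]
  exact mul_le_mul_of_nonneg_right hratio (norm_nonneg _)

theorem kummerMTerm_nonneg {x : ℝ} (ha : 0 < a) (hb : 0 < b) (hx : 0 ≤ x) (n : ℕ) :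
    0 ≤ kummerMTerm a b x n := by
  have := ascPochhammer_pos n a ha
  have := ascPochhammer_pos n b hb
  unfold kummerMTerm
  positivity

theorem kummerM_pos {x : ℝ} (ha : 0 < a) (hb : 0 < b) (hx : 0 ≤ x) : 0 < kummerM a b x :=
  (summable_kummerMTerm x hb).tsum_pos (kummerMTerm_nonneg ha hb hx) 0 (by simp [kummerMTerm])

theorem exp_neg_mul_kummerM (x : ℝ) (hb : 0 < b) :
    exp (-x) * kummerM a b x = kummerM (b - a) b (-x) := by
  have hexp : exp (-x) = ∑' n, (-x) ^ n / n ! := by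
    rw [exp_eq_exp_ℝ, NormedSpace.exp_eq_tsum_div]
  rw [mul_comm, kummerM, hexp, tsum_mul_tsum_eq_tsum_sum_antidiagonal_of_summable_norm
    (summable_kummerMTerm x hb).norm (NormedSpace.norm_expSeries_div_summable (-x))]
  refine tsum_congr fun n => ?_
  have hterm : ∀ ij ∈ antidiagonal n, kummerMTerm a b x ij.1 * ((-x) ^ ij.2 / ij.2 !)
      = (-x) ^ n / ((ascPochhammer ℝ n).eval b * n !) * ((n.choose ij.1 : ℝ) *
        ((-1) ^ ij.1 * (ascPochhammer ℝ ij.1).eval a * (ascPochhammer ℝ ij.2).eval (b + ij.1))) := by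
    rintro ⟨i, j⟩ hij
    rw [HasAntidiagonal.mem_antidiagonal] at hij
    subst hij
    have := ascPochhammer_pos i b hb
    have := ascPochhammer_pos j (b + i) (by positivity)
    have hchoose : ((i + j).choose i : ℝ) * i ! * j ! = (i + j)! := by
      rw [Nat.choose_symm_add]; exact_mod_cast Nat.add_choose_mul_factorial_mul_factorial i j
    rw [kummerMTerm, ascPochhammer_add_eval, ← hchoose, pow_add, neg_pow x i]
    have hc : ((i + j).choose i : ℝ) ≠ 0 := mod_cast (Nat.choose_pos (Nat.le_add_right i j)).ne'
    have hsign : ((-1 : ℝ) ^ i) ^ 2 = 1 := by rw [← pow_mul, pow_mul', neg_one_sq, one_pow]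
    field_simp
    rw [hsign, mul_one]
  rw [sum_congr rfl hterm, ← mul_sum, ← ascPochhammer_eval_sub_eq_sum, kummerMTerm]
  ring

end Kummer

theorem integral_abs_rpow_mul_exp_neg_sq_div_two {s : ℝ} (hs : -1 < s) :
    ∫ x, |x| ^ s * exp (-x ^ 2 / 2) = 2 ^ ((s + 1) / 2) * Gamma ((s + 1) / 2) := by
  have h := integral_comp_abs (f := fun y => y ^ s * exp (-y ^ 2 / 2))
  simp only [sq_abs] at h
  have hIoi : ∫ x in Set.Ioi (0 : ℝ), x ^ s * exp (-x ^ 2 / 2)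
      = (1 / 2) ^ (-(s + 1) / 2) * (1 / 2) * Gamma ((s + 1) / 2) := by
    rw [← integral_rpow_mul_exp_neg_mul_rpow two_pos hs one_half_pos]
    congr! 4 with x
    rw [rpow_two]
    ring
  rw [h, hIoi, one_div, inv_rpow zero_le_two, ← rpow_neg zero_le_two, neg_div, neg_neg]
  ring

/- Integrability is read off from the value of the integral: a function with nonzero integral is
integrable. -/
theorem integrable_abs_rpow_mul_exp_neg_sq_div_two {s : ℝ} (hs : -1 < s) :
    Integrable fun x => |x| ^ s * exp (-x ^ 2 / 2) := by
  refine Integrable.of_integral_ne_zero ?_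
  rw [integral_abs_rpow_mul_exp_neg_sq_div_two hs]
  have := Gamma_pos_of_pos (by linarith : 0 < (s + 1) / 2)
  positivity

theorem integral_mul_exp_eq_integral_mul_cosh {f : ℝ → ℝ} (hf : ∀ x, f (-x) = f x) {g : ℝ}
    (hint : Integrable fun x => f x * exp (g * x)) :
    ∫ x, f x * exp (g * x) = ∫ x, f x * cosh (g * x) := by
  have hint' : Integrable fun x => f x * exp (-(g * x)) := by
    simpa [hf] using hint.comp_neg
  have hneg : ∫ x, f x * exp (-(g * x)) = ∫ x, f x * exp (g * x) := by
    rw [← integral_neg_eq_self]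
    simp [hf]
  simp only [cosh_eq, mul_div, mul_add]
  rw [integral_div, integral_add hint hint', hneg]
  ring

section CoshSeries

variable {p : ℝ} (g : ℝ)

theorem abs_rpow_mul_exp_mul_cosh_eq_tsum {x : ℝ} (hx : x ≠ 0) :
    |x| ^ p * exp (-x ^ 2 / 2) * cosh (g * x)
      = ∑' m : ℕ, g ^ (2 * m) / (2 * m)! * (|x| ^ (p + 2 * m) * exp (-x ^ 2 / 2)) := by
  rw [cosh_eq_tsum, ← tsum_mul_left]
  refine tsum_congr fun m => ?_
  have hpow : |x| ^ (p + 2 * m) = |x| ^ p * x ^ (2 * m) := by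
    rw [← Nat.cast_ofNat, ← Nat.cast_mul, rpow_add_natCast (abs_ne_zero.mpr hx), pow_abs,
      abs_of_nonneg ((even_two_mul m).pow_nonneg x)]
  rw [hpow, mul_pow]
  ring

theorem integral_cosh_term_mul_abs_rpow_mul_exp (hp : -1 < p) (m : ℕ) :
    ∫ x, g ^ (2 * m) / (2 * m)! * (|x| ^ (p + 2 * m) * exp (-x ^ 2 / 2))
      = 2 ^ ((p + 1) / 2) * Gamma ((p + 1) / 2)
        * kummerMTerm ((p + 1) / 2) (1 / 2) (g ^ 2 / 2) m := by
  have ha : 0 < (p + 1) / 2 := by linarith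
  have hs : -1 < p + 2 * m := by linarith [(m.cast_nonneg : (0 : ℝ) ≤ m)]
  have := ascPochhammer_pos m (1 / 2 : ℝ) one_half_pos
  rw [integral_const_mul, integral_abs_rpow_mul_exp_neg_sq_div_two hs,
    show (p + 2 * m + 1) / 2 = (p + 1) / 2 + m by ring,
    Gamma_add_nat_eq_mul_ascPochhammer ha, rpow_add two_pos, rpow_natCast,
    Nat.cast_factorial_two_mul, kummerMTerm,
    show (4 : ℝ) ^ m = 2 ^ m * 2 ^ m by rw [← mul_pow]; norm_num, pow_mul, div_pow]
  field_simp

theorem integral_abs_rpow_mul_exp_mul_cosh (hp : -1 < p) :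
    ∫ x, |x| ^ p * exp (-x ^ 2 / 2) * cosh (g * x)
      = 2 ^ ((p + 1) / 2) * Gamma ((p + 1) / 2)
        * kummerM ((p + 1) / 2) (1 / 2) (g ^ 2 / 2) := by
  set F : ℕ → ℝ → ℝ := fun m x =>
    g ^ (2 * m) / (2 * m)! * (|x| ^ (p + 2 * m) * exp (-x ^ 2 / 2))
  have hF_nonneg (m : ℕ) (x : ℝ) : 0 ≤ F m x := by
    have := (even_two_mul m).pow_nonneg g
    positivity
  have hF_int (m : ℕ) : Integrable (F m) :=
    (integrable_abs_rpow_mul_exp_neg_sq_div_two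
      (by linarith [(m.cast_nonneg : (0 : ℝ) ≤ m)])).const_mul _
  have hF_sum : Summable fun m => ∫ x, ‖F m x‖ := by
    simp only [norm_of_nonneg (hF_nonneg _ _), F,
      integral_cosh_term_mul_abs_rpow_mul_exp g hp]
    exact (summable_kummerMTerm _ one_half_pos).mul_left _
  have hsum := hasSum_integral_of_summable_integral_norm hF_int hF_sum
  simp only [F, integral_cosh_term_mul_abs_rpow_mul_exp g hp] at hsum
  rw [kummerM, ← tsum_mul_left, hsum.tsum_eq]
  refine integral_congr_ae ?_
  filter_upwards [Measure.ae_ne volume 0] with x hx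
  exact abs_rpow_mul_exp_mul_cosh_eq_tsum g hx

theorem integrable_abs_rpow_mul_exp_mul_cosh (hp : -1 < p) :
    Integrable fun x => |x| ^ p * exp (-x ^ 2 / 2) * cosh (g * x) := by
  refine Integrable.of_integral_ne_zero ?_
  have ha : 0 < (p + 1) / 2 := by linarith
  have := Gamma_pos_of_pos ha
  have := kummerM_pos ha one_half_pos (by positivity : 0 ≤ g ^ 2 / 2)
  rw [integral_abs_rpow_mul_exp_mul_cosh g hp]
  positivity

end CoshSeries

theorem integral_abs_rpow_gaussianReal (g : ℝ) {p : ℝ} (hp : -1 < p) :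
    ∫ x, |x| ^ p ∂gaussianReal g 1
      = 2 ^ (p / 2) * Gamma ((p + 1) / 2) / √π * kummerM (-p / 2) (1 / 2) (-g ^ 2 / 2) := by
  have hdensity (x : ℝ) : gaussianPDFReal g 1 x • |x| ^ p = (√(2 * π))⁻¹ * exp (-g ^ 2 / 2)
      * (|x| ^ p * exp (-x ^ 2 / 2) * exp (g * x)) := by
    simp only [gaussianPDFReal, NNReal.coe_one, mul_one, smul_eq_mul]
    rw [show -(x - g) ^ 2 / 2 = -g ^ 2 / 2 + (-x ^ 2 / 2 + g * x) by ring, exp_add,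
      exp_add]
    ring
  have hint : Integrable fun x => |x| ^ p * exp (-x ^ 2 / 2) * exp (g * x) := by
    refine ((integrable_abs_rpow_mul_exp_mul_cosh g hp).const_mul 2).mono'
      (by fun_prop) (ae_of_all _ fun x => ?_)
    rw [norm_of_nonneg (by positivity), cosh_eq]
    have := exp_pos (-(g * x))
    have : 0 ≤ |x| ^ p * exp (-x ^ 2 / 2) := by positivity
    nlinarith
  have hkummer := exp_neg_mul_kummerM (a := (p + 1) / 2) (g ^ 2 / 2) one_half_pos
  rw [show (1 : ℝ) / 2 - (p + 1) / 2 = -p / 2 by ring, ← neg_div] at hkummer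
  have hconst : (√(2 * π))⁻¹ * 2 ^ ((p + 1) / 2) = 2 ^ (p / 2) / √π := by
    rw [show (p + 1) / 2 = p / 2 + 1 / 2 by ring, rpow_add two_pos, ← sqrt_eq_rpow,
      sqrt_mul zero_le_two]
    field_simp
  rw [integral_gaussianReal_eq_integral_smul one_ne_zero]
  simp only [hdensity]
  rw [integral_const_mul, integral_mul_exp_eq_integral_mul_cosh (by simp) hint,
    integral_abs_rpow_mul_exp_mul_cosh g hp, ← hkummer]
  linear_combination (Gamma ((p + 1) / 2) * exp (-g ^ 2 / 2)
    * kummerM ((p + 1) / 2) (1 / 2) (g ^ 2 / 2)) * hconst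

/-- Moments of fractional powers of a noncentral Gaussian: if `Z ~ N(g,1)` and
`q ≥ 1`, then `E[|Z|^{2/q}] = (1/√π)·2^{1/q}·Γ(1/q + 1/2)·M(−1/q, 1/2, −g²/2)`,
where `M(c, d, x) = Σ_{n≥0} (c)_n x^n / ((d)_n n!)` is the confluent
hypergeometric function ((c)_n the rising factorial). -/
theorem gaussian_fractional_moment (g q : ℝ) (hq : 1 ≤ q) :
    ∫ x, |x| ^ (2 / q) ∂(gaussianReal g 1)
      = (1 / Real.sqrt π) * 2 ^ (1 / q) * Real.Gamma (1 / q + 1 / 2)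
        * ∑' n : ℕ, (ascPochhammer ℝ n).eval (-1 / q) * (-(g ^ 2) / 2) ^ n
            / ((ascPochhammer ℝ n).eval (1 / 2) * (n.factorial : ℝ)) := by
  have hq₀ : 0 < q := by linarith
  rw [integral_abs_rpow_gaussianReal g (by linarith [div_pos two_pos hq₀] : -1 < 2 / q),
    show 2 / q / 2 = 1 / q by ring, show (2 / q + 1) / 2 = 1 / q + 1 / 2 by ring,
    show -(2 / q) / 2 = -1 / q by ring]
  unfold kummerM kummerMTerm
  ring
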